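/- In the formal one-variable setting, each variable φ_n first appears in the critical value Φ_c = Φ(t_c) only in monomials of total degree (in the grading deg φ_m = 2) at least 2(n+1); equivalently, the coefficient of any monomial of Φ_c involving φ_n and of degree less than 2(n+1) vanishes. -/

import Mathlib

open MvPowerSeries

/-- The formal series `φ'(t_c) = Σ_{n≥1} n φ_n t_c^{n-1}` evaluated at a power series `t_c` in
the variables `φ_n` (`n ∈ ℕ+`), defined coefficientwise. -/
noncomputable def phiDerivEval (R : Type*) [CommRing R] (t : MvPowerSeries ℕ+ R) :
    MvPowerSeries ℕ+ R :=
  fun d => ∑ n ∈ d.support, ((n : ℕ) : R) *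
    MvPowerSeries.coeff (R := R) (d - Finsupp.single n 1) (t ^ ((n : ℕ) - 1))

/-- The formal series `φ(t_c) = Σ_{n≥1} φ_n t_c^n` evaluated at a power series `t_c` in the
variables `φ_n`, defined coefficientwise. -/
noncomputable def phiEval (R : Type*) [CommRing R] (t : MvPowerSeries ℕ+ R) :
    MvPowerSeries ℕ+ R :=
  fun d => ∑ n ∈ d.support,
    MvPowerSeries.coeff (R := R) (d - Finsupp.single n 1) (t ^ (n : ℕ))


section Aux
variable {R : Type*} [CommRing R]

lemma deg_pos_of_ne_zero {d : ℕ+ →₀ ℕ} (h : d ≠ 0) : 1 ≤ d.sum fun _ k => k := by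
  obtain ⟨a, ha⟩ : ∃ a, d a ≠ 0 := by
    by_contra hc; push_neg at hc; exact h (Finsupp.ext hc)
  calc 1 ≤ d a := Nat.one_le_iff_ne_zero.2 ha
  _ ≤ d.sum fun _ k => k :=
    Finset.single_le_sum (fun i _ => Nat.zero_le _) (Finsupp.mem_support_iff.2 ha)

lemma deg_add (e f : ℕ+ →₀ ℕ) :
    (e + f).sum (fun _ k => k) = (e.sum fun _ k => k) + (f.sum fun _ k => k) :=
  Finsupp.sum_add_index' (fun _ => rfl) (fun _ _ _ => rfl)

lemma deg_sub_single {d : ℕ+ →₀ ℕ} {m : ℕ+} (hm : d m ≠ 0) :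
    ((d - Finsupp.single m 1).sum fun _ k => k) + 1 = d.sum fun _ k => k := by
  have hle : Finsupp.single m 1 ≤ d := Finsupp.single_le_iff.2 (Nat.one_le_iff_ne_zero.2 hm)
  have h1 : (d - Finsupp.single m 1) + Finsupp.single m 1 = d := tsub_add_cancel_of_le hle
  have := deg_add (d - Finsupp.single m 1) (Finsupp.single m 1)
  rw [h1] at this
  rw [this, Finsupp.sum_single_index rfl]

/-- Key bound for powers of a series whose small-degree coefficients satisfy the degree bound. -/
lemma pow_bound (t : MvPowerSeries ℕ+ R) (M : ℕ)
    (hmin : ∀ e : ℕ+ →₀ ℕ, (e.sum fun _ k => k) ≤ M → coeff (R := R) e t ≠ 0 →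
      1 ≤ (e.sum fun _ k => k) ∧ ∀ n : ℕ+, e n ≠ 0 → (n : ℕ) ≤ e.sum fun _ k => k) :
    ∀ (k : ℕ) (d : ℕ+ →₀ ℕ), (d.sum fun _ k => k) ≤ M → coeff (R := R) d (t ^ k) ≠ 0 →
      k ≤ (d.sum fun _ k => k) ∧
        ∀ n : ℕ+, d n ≠ 0 → (n : ℕ) + (k - 1) ≤ d.sum fun _ k => k := by
  intro k
  induction k with
  | zero =>
    intro d _ hne
    rw [pow_zero, coeff_one] at hne
    have hd : d = 0 := by by_contra h; simp [h] at hne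
    subst hd
    exact ⟨Nat.zero_le _, fun n hn => absurd rfl hn⟩
  | succ k ih =>
    intro d hdM hne
    rw [pow_succ, mul_comm, coeff_mul] at hne
    obtain ⟨p, hp, hterm⟩ := Finset.exists_ne_zero_of_sum_ne_zero hne
    rw [Finset.HasAntidiagonal.mem_antidiagonal] at hp
    have h1 : coeff (R := R) p.1 t ≠ 0 := fun h => hterm (by rw [h, zero_mul])
    have h2 : coeff (R := R) p.2 (t ^ k) ≠ 0 := fun h => hterm (by rw [h, mul_zero])
    have hdsum : (d.sum fun _ k => k) =
        (p.1.sum fun _ k => k) + (p.2.sum fun _ k => k) := by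
      rw [← hp, deg_add]
    have hp1M : (p.1.sum fun _ k => k) ≤ M := le_trans (by omega) hdM
    have hp2M : (p.2.sum fun _ k => k) ≤ M := le_trans (by omega) hdM
    obtain ⟨h11, h12⟩ := hmin p.1 hp1M h1
    obtain ⟨h21, h22⟩ := ih p.2 hp2M h2
    constructor
    · omega
    · intro n hn
      have hdn : d n = p.1 n + p.2 n := by rw [← hp]; rfl
      rcases Nat.eq_zero_or_pos (p.1 n) with h | h
      · have hp2n : p.2 n ≠ 0 := by omega
        have := h22 n hp2n
        rcases Nat.eq_zero_or_pos k with hk | hk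
        · subst hk
          rw [pow_zero, coeff_one] at h2
          have : p.2 = 0 := by by_contra hh; simp [hh] at h2
          rw [this] at hp2n; exact absurd rfl hp2n
        · omega
      · have := h12 n (by omega)
        omega

/-- Every monomial of `t_c` involving `φ_n` has degree at least `n`. -/
lemma tc_bound (t_c : MvPowerSeries ℕ+ R)
    (h0 : MvPowerSeries.constantCoeff (σ := ℕ+) (R := R) t_c = 0)
    (hcrit : t_c + phiDerivEval R t_c = 0) :
    ∀ d : ℕ+ →₀ ℕ, coeff (R := R) d t_c ≠ 0 →
      1 ≤ (d.sum fun _ k => k) ∧ ∀ n : ℕ+, d n ≠ 0 → (n : ℕ) ≤ d.sum fun _ k => k := by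
  intro d
  generalize hD : (d.sum fun _ k => k) = D
  induction D using Nat.strong_induction_on generalizing d with
  | _ D ih =>
  intro hne
  have hd0 : d ≠ 0 := by
    rintro rfl
    exact hne h0
  have hdeg1 : 1 ≤ (d.sum fun _ k => k) := deg_pos_of_ne_zero hd0
  subst hD
  refine ⟨hdeg1, fun n hn => ?_⟩
  -- use the critical point equation
  have hcoeff : coeff (R := R) d t_c = -(∑ m ∈ d.support, ((m : ℕ) : R) *
      coeff (R := R) (d - Finsupp.single m 1) (t_c ^ ((m : ℕ) - 1))) := by
    have h : coeff (R := R) d t_c + coeff (R := R) d (phiDerivEval R t_c) = 0 := by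
      rw [← map_add, hcrit, map_zero]
    exact eq_neg_of_add_eq_zero_left h
  rw [hcoeff] at hne
  have hne' : ∑ m ∈ d.support, ((m : ℕ) : R) *
      coeff (R := R) (d - Finsupp.single m 1) (t_c ^ ((m : ℕ) - 1)) ≠ 0 := fun h => hne (by rw [h, neg_zero])
  obtain ⟨m, hmsup, hterm⟩ := Finset.exists_ne_zero_of_sum_ne_zero hne'
  have hdm : d m ≠ 0 := Finsupp.mem_support_iff.1 hmsup
  have hcoef : coeff (R := R) (d - Finsupp.single m 1) (t_c ^ ((m : ℕ) - 1)) ≠ 0 :=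
    fun h => hterm (by rw [h, mul_zero])
  set f := d - Finsupp.single m 1 with hf
  have hfd : (f.sum fun _ k => k) + 1 = d.sum fun _ k => k := deg_sub_single hdm
  have hM : (f.sum fun _ k => k) < d.sum fun _ k => k := by omega
  have hpow := pow_bound t_c ((d.sum fun _ k => k) - 1)
    (fun e he hene => ih (e.sum fun _ k => k) (by omega) e rfl hene)
    ((m : ℕ) - 1) f (by omega) hcoef
  obtain ⟨hk1, hk2⟩ := hpow
  rcases eq_or_ne n m with rfl | hnm
  · have hm1 : 0 < (n : ℕ) := n.pos
    omega
  · have hfn : f n ≠ 0 := by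
      have : f n = d n := by
        rw [hf]
        simp [Finsupp.single_apply, hnm.symm]
      omega
    have := hk2 n hfn
    have hm1 : 0 < (m : ℕ) := m.pos
    omega
end Aux

/-- In the formal one-variable setting `Φ(t) = t²/2 + Σ_{n≥1} φ_n tⁿ` with
`t_c` the unique formal critical point and `Φ_c = Φ(t_c)`, each variable `φ_n` first appears
in `Φ_c` only in monomials of total degree (in the grading `deg φ_m = 2`) at least `2(n+1)`:
the coefficient of any monomial of `Φ_c` involving `φ_n` and of degree less than `2(n+1)`
vanishes. -/
theorem formal_critical_value_first_appearance (R : Type*) [CommRing R] [Algebra ℚ R]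
    (t_c : MvPowerSeries ℕ+ R)
    (h0 : MvPowerSeries.constantCoeff (σ := ℕ+) (R := R) t_c = 0)
    (hcrit : t_c + phiDerivEval R t_c = 0) :
    ∀ (n : ℕ+) (d : ℕ+ →₀ ℕ), d n ≠ 0 → 2 * (d.sum fun _ k => k) < 2 * ((n : ℕ) + 1) →
      MvPowerSeries.coeff (R := R) d
        (MvPowerSeries.C (σ := ℕ+) (R := R) (algebraMap ℚ R (1/2)) * t_c ^ 2 + phiEval R t_c) = 0 := by
  intro n d hdn hdeg
  have hdeg' : (d.sum fun _ k => k) ≤ (n : ℕ) := by omega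
  have htc := tc_bound t_c h0 hcrit
  rw [map_add]
  have h2 : coeff (R := R) d (t_c ^ 2) = 0 := by
    by_contra hne
    obtain ⟨-, h⟩ := pow_bound t_c (d.sum fun _ k => k)
      (fun e he hene => htc e hene) 2 d le_rfl hne
    have := h n hdn
    omega
  have h1 : coeff (R := R) d (MvPowerSeries.C (σ := ℕ+) (R := R) (algebraMap ℚ R (1/2)) * t_c ^ 2) = 0 := by
    rw [coeff_C_mul, h2, mul_zero]
  have h3 : coeff (R := R) d (phiEval R t_c) = 0 := by
    have hrfl : coeff (R := R) d (phiEval R t_c) = ∑ m ∈ d.support,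
        coeff (R := R) (d - Finsupp.single m 1) (t_c ^ (m : ℕ)) := rfl
    rw [hrfl]
    apply Finset.sum_eq_zero
    intro m hm
    by_contra hne
    have hdm : d m ≠ 0 := Finsupp.mem_support_iff.1 hm
    set f := d - Finsupp.single m 1 with hf
    have hfd : (f.sum fun _ k => k) + 1 = d.sum fun _ k => k := deg_sub_single hdm
    obtain ⟨hk1, hk2⟩ := pow_bound t_c (d.sum fun _ k => k)
      (fun e he hene => htc e hene) (m : ℕ) f (by omega) hne
    rcases eq_or_ne n m with rfl | hnm
    · omega
    · have hfn : f n ≠ 0 := by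
        have : f n = d n := by
          rw [hf]
          simp [Finsupp.tsub_apply, Finsupp.single_apply, hnm.symm]
        omega
      have := hk2 n hfn
      have := m.pos
      omega
  rw [h1, h3, add_zero]
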